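/- Let α ∈ (1,2). There exists a constant C > 0 depending only on α such that whenever x, w ∈ B satisfy f(x,w) ≥ 4, then for all y, z ∈ B with y ≠ x and z ≠ w, g(x,y) g(z,w) / g(x,w) ≤ C · δ_B(y)^{(α−1)/2} δ_B(z)^{(α−1)/2} ≤ C. -/

import Mathlib

/-!
If `f(x,w) ≥ 1` then `|x - w| ≤ √(δ(x)δ(w))`, so the minimum defining `g(x,w)` is attained by
its first term `(δ(x)δ(w))^((α-1)/2)`. Bounding `g(x,y)` and `g(z,w)` by their first terms as
well, the factors `δ(x)` and `δ(w)` cancel in the ratio, and `δ ≤ 1` on `B` gives the second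
inequality; `C = 1` works.
-/

open Real Set

/-- `δ_B(x) = dist(x, ℝ∖(0,2)) = min(x, 2-x)` for `x ∈ B = (0,2)`. -/
noncomputable def deltaB (x : ℝ) : ℝ := min x (2 - x)

/-- `f(x,y) = δ_B(x)δ_B(y)/|x-y|²`. -/
noncomputable def fB (x y : ℝ) : ℝ := deltaB x * deltaB y / |x - y| ^ 2

/-- `g(x,y) = min{(δ_B(x)δ_B(y))^{(α-1)/2}, δ_B(x)^{α/2}δ_B(y)^{α/2}/|x-y|}`, comparable to
the Green function of the symmetric α-stable process (α ∈ (1,2)) killed upon exiting `(0,2)`. -/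
noncomputable def gB (α x y : ℝ) : ℝ :=
  min ((deltaB x * deltaB y) ^ ((α - 1) / 2))
    (deltaB x ^ (α / 2) * deltaB y ^ (α / 2) / |x - y|)

lemma deltaB_pos {x : ℝ} (hx : x ∈ Ioo (0 : ℝ) 2) : 0 < deltaB x :=
  lt_min hx.1 (by linarith [hx.2])

lemma deltaB_le_one (x : ℝ) : deltaB x ≤ 1 := by
  rcases le_total x 1 with h | h
  · exact (min_le_left _ _).trans h
  · exact (min_le_right _ _).trans (by linarith)

lemma gB_nonneg (α : ℝ) {x y : ℝ} (hx : x ∈ Ioo (0 : ℝ) 2) (hy : y ∈ Ioo (0 : ℝ) 2) :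
    0 ≤ gB α x y := by
  have := deltaB_pos hx
  have := deltaB_pos hy
  exact le_min (by positivity) (by positivity)

lemma gB_le_rpow_mul_rpow (α : ℝ) {x y : ℝ} (hx : x ∈ Ioo (0 : ℝ) 2)
    (hy : y ∈ Ioo (0 : ℝ) 2) :
    gB α x y ≤ deltaB x ^ ((α - 1) / 2) * deltaB y ^ ((α - 1) / 2) :=
  (min_le_left _ _).trans_eq (mul_rpow (deltaB_pos hx).le (deltaB_pos hy).le)

lemma abs_sub_pos_of_one_le_fB {x w : ℝ} (h : 1 ≤ fB x w) : 0 < |x - w| := by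
  refine (abs_nonneg _).lt_of_ne fun h0 => ?_
  have : fB x w = 0 := by simp [fB, ← h0]
  linarith

lemma abs_sub_le_sqrt_of_one_le_fB {x w : ℝ} (h : 1 ≤ fB x w) :
    |x - w| ≤ √(deltaB x * deltaB w) := by
  have hpos := abs_sub_pos_of_one_le_fB h
  refine abs_le_sqrt ?_
  rw [← sq_abs]
  rwa [fB, one_le_div (by positivity)] at h

lemma gB_eq_of_one_le_fB (α : ℝ) {x w : ℝ} (hx : x ∈ Ioo (0 : ℝ) 2)
    (hw : w ∈ Ioo (0 : ℝ) 2) (h : 1 ≤ fB x w) :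
    gB α x w = (deltaB x * deltaB w) ^ ((α - 1) / 2) := by
  have hpos : 0 < deltaB x * deltaB w := mul_pos (deltaB_pos hx) (deltaB_pos hw)
  refine min_eq_left ?_
  rw [← mul_rpow (deltaB_pos hx).le (deltaB_pos hw).le, le_div_iff₀ (abs_sub_pos_of_one_le_fB h)]
  calc (deltaB x * deltaB w) ^ ((α - 1) / 2) * |x - w|
      ≤ (deltaB x * deltaB w) ^ ((α - 1) / 2) * √(deltaB x * deltaB w) := by
        gcongr; exact abs_sub_le_sqrt_of_one_le_fB h
    _ = (deltaB x * deltaB w) ^ (α / 2) := by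
        rw [sqrt_eq_rpow, ← rpow_add hpos]; ring_nf

lemma gB_mul_gB_div_gB_le_of_one_le_fB (α : ℝ) {x y z w : ℝ} (hx : x ∈ Ioo (0 : ℝ) 2)
    (hy : y ∈ Ioo (0 : ℝ) 2) (hz : z ∈ Ioo (0 : ℝ) 2) (hw : w ∈ Ioo (0 : ℝ) 2)
    (h : 1 ≤ fB x w) :
    gB α x y * gB α z w / gB α x w ≤ deltaB y ^ ((α - 1) / 2) * deltaB z ^ ((α - 1) / 2) := by
  have hxw := gB_eq_of_one_le_fB α hx hw h
  have hxw_pos : 0 < gB α x w := hxw ▸ rpow_pos_of_pos (mul_pos (deltaB_pos hx) (deltaB_pos hw)) _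
  rw [div_le_iff₀ hxw_pos, hxw, mul_rpow (deltaB_pos hx).le (deltaB_pos hw).le]
  calc gB α x y * gB α z w
      ≤ (deltaB x ^ ((α - 1) / 2) * deltaB y ^ ((α - 1) / 2))
          * (deltaB z ^ ((α - 1) / 2) * deltaB w ^ ((α - 1) / 2)) :=
        mul_le_mul (gB_le_rpow_mul_rpow α hx hy) (gB_le_rpow_mul_rpow α hz hw)
          (gB_nonneg α hz hw) (mul_nonneg (rpow_nonneg (deltaB_pos hx).le _)
            (rpow_nonneg (deltaB_pos hy).le _))
    _ = _ := by ring

lemma deltaB_rpow_mul_deltaB_rpow_le_one {p y z : ℝ} (hp : 0 ≤ p) (hy : y ∈ Ioo (0 : ℝ) 2)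
    (hz : z ∈ Ioo (0 : ℝ) 2) : deltaB y ^ p * deltaB z ^ p ≤ 1 :=
  mul_le_one₀ (rpow_le_one (deltaB_pos hy).le (deltaB_le_one y) hp)
    (rpow_nonneg (deltaB_pos hz).le _) (rpow_le_one (deltaB_pos hz).le (deltaB_le_one z) hp)

theorem green_ratio_bound (α : ℝ) (hα : α ∈ Set.Ioo (1:ℝ) 2) :
    ∃ C : ℝ, 0 < C ∧ ∀ x ∈ Set.Ioo (0:ℝ) 2, ∀ w ∈ Set.Ioo (0:ℝ) 2, 4 ≤ fB x w →
      ∀ y ∈ Set.Ioo (0:ℝ) 2, ∀ z ∈ Set.Ioo (0:ℝ) 2, y ≠ x → z ≠ w →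
        gB α x y * gB α z w / gB α x w
            ≤ C * (deltaB y ^ ((α - 1) / 2) * deltaB z ^ ((α - 1) / 2)) ∧
        C * (deltaB y ^ ((α - 1) / 2) * deltaB z ^ ((α - 1) / 2)) ≤ C := by
  have hp : 0 ≤ (α - 1) / 2 := by linarith [hα.1]
  refine ⟨1, one_pos, fun x hx w hw hfw y hy z hz _ _ => ?_⟩
  rw [one_mul]
  exact ⟨gB_mul_gB_div_gB_le_of_one_le_fB α hx hy hz hw (by linarith),
    deltaB_rpow_mul_deltaB_rpow_le_one hp hy hz⟩
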